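/- The set of irreducible λ-quiddities over ℕ* = {1,2,3,…} (viewed as a subset of ℤ) is exactly the set of constant tuples (1,1,…,1) of size 3n for n ∈ ℕ*. -/

import Mathlib

/-- The matrix `[[a, -1], [1, 0]]`. -/
def mMat {A : Type*} [CommRing A] (a : A) : Matrix (Fin 2) (Fin 2) A := !![a, -1; 1, 0]

/-- `M_n(a₁, …, aₙ) = mMat aₙ * ⋯ * mMat a₁`, for the tuple given as a list `[a₁, …, aₙ]`. -/
def mProd {A : Type*} [CommRing A] (l : List A) : Matrix (Fin 2) (Fin 2) A :=
  ((l.map mMat).reverse).prod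

/-- The sum `(a₁,…,aₙ) ⊕ (b₁,…,b_m) = (a₁+b_m, a₂,…,a_{n−1}, aₙ+b₁, b₂,…,b_{m−1})`. -/
def oplus {A : Type*} [CommRing A] (a b : List A) : List A :=
  (a.headD 0 + b.getLastD 0) ::
    (a.dropLast.tail ++ (a.getLastD 0 + b.headD 0) :: b.dropLast.tail)

/-- Two tuples are equivalent if one is a cyclic rotation of the other or of its reversal. -/
def TupEquiv {A : Type*} (a b : List A) : Prop :=
  (∃ k, b = a.rotate k) ∨ (∃ k, b = a.reverse.rotate k)

/-- A λ-quiddity over `R ⊆ A`: all entries lie in `R` and `M_n(a₁,…,aₙ) = ± Id`. -/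
def IsQuiddity {A : Type*} [CommRing A] (R : Set A) (c : List A) : Prop :=
  (∀ x ∈ c, x ∈ R) ∧ (mProd c = 1 ∨ mProd c = -1)

/-- A λ-quiddity `c` over `R` is reducible if `c ∼ a ⊕ b` with `a ∈ R^m`, `m ≥ 3`,
and `b` a λ-quiddity over `R` of size `l ≥ 3`. -/
def IsReducible {A : Type*} [CommRing A] (R : Set A) (c : List A) : Prop :=
  ∃ a b : List A, 3 ≤ a.length ∧ 3 ≤ b.length ∧ (∀ x ∈ a, x ∈ R) ∧
    IsQuiddity R b ∧ TupEquiv c (oplus a b)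

/-- An irreducible λ-quiddity over `R`: a λ-quiddity of size `≥ 3` which is not reducible. -/
def IrreducibleQuiddity {A : Type*} [CommRing A] (R : Set A) (c : List A) : Prop :=
  IsQuiddity R c ∧ 3 ≤ c.length ∧ ¬ IsReducible R c

/-- The continuant `K_i(a₁,…,a_i)`, determinant of the tridiagonal matrix with diagonal
`a₁,…,a_i` and off-diagonal entries `1`; `K₀ = 1`. -/
def cont {A : Type*} [CommRing A] : List A → A
  | [] => 1
  | [a] => a
  | a :: b :: l => a * cont (b :: l) - cont l

/-!
Since `M(1)³ = -Id`, the all-ones tuple of size `m` is a λ-quiddity exactly when `3 ∣ m`, and it is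
irreducible because the first entry `a₁ + bₗ` of a sum of positive tuples is at least `2`.

Conversely, cut a positive λ-quiddity with an entry `≥ 2` cyclically into blocks `(x, 1, …, 1)`,
`x ≥ 2`. A block whose run of ones has length `≢ 1 (mod 3)` acts, up to sign, as `M(x)` or
`M(1)² M(x)`; both map the cone `p (p - q) > 0` of first columns `(p, q)` into itself and off
the line `q = 0`, so if all runs were of this kind the product could not be `± Id`. Hence some run
`1^r` with `r ≡ 1 (mod 3)` is followed cyclically by an entry `w ≥ 2`, and
`(w, e, x, 1^r) = (w - 1, e, x - 1) ⊕ 1^(r+2)` is a reduction unless `e` is empty; the tuples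
`(x, 1^r)` and `(w, x, 1^r)` left over are not λ-quiddities by direct computation.
-/

open List Matrix

section Products

variable {A : Type*} [CommRing A]

lemma mProd_append (u v : List A) : mProd (u ++ v) = mProd v * mProd u := by
  simp [mProd]

lemma mProd_cons (a : A) (l : List A) : mProd (a :: l) = mProd l * mMat a := by
  simp [mProd]

lemma mProd_replicate (m : ℕ) (a : A) : mProd (replicate m a) = mMat a ^ m := by
  simp [mProd]

lemma mMat_one_pow_three : mMat (1 : A) ^ 3 = -1 := by
  ext i j
  fin_cases i <;> fin_cases j <;> simp [pow_succ, mMat, mul_apply, Fin.sum_univ_two]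

lemma mMat_one_pow (r : ℕ) : mMat (1 : A) ^ r = (-1 : A) ^ (r / 3) • mMat 1 ^ (r % 3) := by
  conv_lhs => rw [← Nat.div_add_mod r 3]
  rw [pow_add, pow_mul, mMat_one_pow_three]
  rcases Nat.even_or_odd (r / 3) with h | h <;> simp [h.neg_one_pow]

lemma mMat_one_sq_mul_mMat (x : A) :
    mMat 1 ^ 2 * mMat x = !![-1, 0; x - 1, -1] := by
  ext i j
  fin_cases i <;> fin_cases j <;> simp [pow_two, mMat, mul_apply, Fin.sum_univ_two, sub_eq_add_neg]

lemma mProd_cons_replicate_one (x : A) (r : ℕ) :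
    mProd (x :: replicate r 1) = (-1 : A) ^ (r / 3) • (mMat 1 ^ (r % 3) * mMat x) := by
  rw [mProd_cons, mProd_replicate, mMat_one_pow, smul_mul_assoc]

lemma mProd_rotate_eq_one_or_neg_one {l : List A} (h : mProd l = 1 ∨ mProd l = -1) (k : ℕ) :
    mProd (l.rotate k) = 1 ∨ mProd (l.rotate k) = -1 := by
  rw [rotate_eq_drop_append_take_mod, mProd_append]
  rw [← take_append_drop (k % l.length) l, mProd_append] at h
  rcases h with h | h
  · exact Or.inl (mul_eq_one_comm.1 h)
  · have : -mProd (take (k % l.length) l) * mProd (drop (k % l.length) l) = 1 :=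
      mul_eq_one_comm.1 (by rw [mul_neg, h, neg_neg])
    exact Or.inr (by rw [← neg_eq_iff_eq_neg, ← neg_mul, this])

lemma apply_one_zero_eq_zero_of_eq_one_or_neg_one {P : Matrix (Fin 2) (Fin 2) A}
    (h : P = 1 ∨ P = -1) : P 1 0 = 0 := by
  rcases h with rfl | rfl <;> simp

lemma mProd_replicate_one_eq_one_or_neg_one_iff [Nontrivial A] (m : ℕ) :
    mProd (replicate m (1 : A)) = 1 ∨ mProd (replicate m (1 : A)) = -1 ↔ m % 3 = 0 := by
  constructor
  · intro h
    have h10 := apply_one_zero_eq_zero_of_eq_one_or_neg_one h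
    rw [mProd_replicate, mMat_one_pow] at h10
    rcases (by omega : m % 3 = 0 ∨ m % 3 = 1 ∨ m % 3 = 2) with h3 | h3 | h3 <;>
      simp [h3, mMat, pow_two, neg_one_pow_ne_zero] at h10 ⊢
  · intro h
    rw [mProd_replicate, ← Nat.div_add_mod m 3, h, add_zero, pow_mul, mMat_one_pow_three]
    exact neg_one_pow_eq_or _ _

lemma oplus_cons_append_singleton (a₁ aₙ b₁ bₗ : A) (a b : List A) :
    oplus (a₁ :: (a ++ [aₙ])) (b₁ :: (b ++ [bₗ])) = (a₁ + bₗ) :: (a ++ (aₙ + b₁) :: b) := by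
  show oplus ((a₁ :: a) ++ [aₙ]) ((b₁ :: b) ++ [bₗ]) = _
  simp only [oplus, getLastD_concat, dropLast_concat]
  rfl

end Products

lemma TupEquiv.eq_replicate {α : Type*} {n : ℕ} {a : α} {d : List α}
    (h : TupEquiv (replicate n a) d) : d = replicate n a := by
  rcases h with ⟨k, rfl⟩ | ⟨k, rfl⟩ <;> simp [rotate_replicate]

def InCone (P : Matrix (Fin 2) (Fin 2) ℤ) : Prop := 0 < P 0 0 * (P 0 0 - P 1 0)

lemma inCone_neg {P : Matrix (Fin 2) (Fin 2) ℤ} : InCone (-P) ↔ InCone P := by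
  simp only [InCone, neg_apply]
  ring_nf

lemma inCone_one : InCone 1 := by simp [InCone]

lemma pos_or_neg_of_mul_sub_pos {x p q : ℤ} (hx : 2 ≤ x) (h : 0 < p * (p - q)) :
    (0 < p ∧ 0 < x * p - q ∧ 0 < (x - 1) * p - q) ∨
      (p < 0 ∧ x * p - q < 0 ∧ (x - 1) * p - q < 0) := by
  rcases pos_and_pos_or_neg_and_neg_of_mul_pos h with ⟨hp, hpq⟩ | ⟨hp, hpq⟩
  · have : 2 * p ≤ x * p := by nlinarith
    exact Or.inl ⟨hp, by linarith, by linarith⟩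
  · have : x * p ≤ 2 * p := by nlinarith
    exact Or.inr ⟨hp, by linarith, by linarith⟩

section Step

variable {x : ℤ} {P : Matrix (Fin 2) (Fin 2) ℤ}

lemma inCone_mMat_mul (hx : 2 ≤ x) (hP : InCone P) :
    InCone (mMat x * P) ∧ (mMat x * P) 1 0 ≠ 0 := by
  simp only [InCone, mMat, mul_apply, of_apply, cons_val', cons_val_fin_one, cons_val_zero,
    cons_val_one, Fin.sum_univ_two, neg_mul, one_mul, zero_mul, add_zero] at hP ⊢
  rcases pos_or_neg_of_mul_sub_pos hx hP with ⟨h1, h2, h3⟩ | ⟨h1, h2, h3⟩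
  · exact ⟨by nlinarith, by omega⟩
  · exact ⟨by nlinarith, by omega⟩

lemma inCone_mMat_one_sq_mul (hx : 2 ≤ x) (hP : InCone P) :
    InCone (mMat 1 ^ 2 * mMat x * P) ∧ (mMat (1 : ℤ) ^ 2 * mMat x * P) 1 0 ≠ 0 := by
  rw [mMat_one_sq_mul_mMat]
  simp only [InCone, mul_apply, of_apply, cons_val', cons_val_zero, cons_val_fin_one, cons_val_one,
    Fin.sum_univ_two, neg_mul, one_mul, zero_mul, add_zero] at hP ⊢
  rcases pos_or_neg_of_mul_sub_pos hx hP with ⟨h1, h2, h3⟩ | ⟨h1, h2, h3⟩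
  · exact ⟨by nlinarith, by nlinarith⟩
  · exact ⟨by nlinarith, by nlinarith⟩

lemma inCone_mProd_cons_replicate_one_mul {r : ℕ} (hx : 2 ≤ x) (hr : r % 3 ≠ 1)
    (hP : InCone P) :
    InCone (mProd (x :: replicate r 1) * P) ∧ (mProd (x :: replicate r 1) * P) 1 0 ≠ 0 := by
  have hstep : InCone (mMat 1 ^ (r % 3) * mMat x * P) ∧
      (mMat (1 : ℤ) ^ (r % 3) * mMat x * P) 1 0 ≠ 0 := by
    rcases (by omega : r % 3 = 0 ∨ r % 3 = 2) with h | h <;> rw [h]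
    · simpa using inCone_mMat_mul hx hP
    · exact inCone_mMat_one_sq_mul hx hP
  rw [mProd_cons_replicate_one, smul_mul_assoc]
  rcases neg_one_pow_eq_or ℤ (r / 3) with h | h <;> rw [h]
  · simpa using hstep
  · simpa [inCone_neg] using hstep

end Step

def ofBlocks (bs : List (ℤ × ℕ)) : List ℤ :=
  bs.flatMap fun b => b.1 :: replicate b.2 1

@[simp]
lemma ofBlocks_nil : ofBlocks [] = [] := rfl

@[simp]
lemma ofBlocks_cons (b : ℤ × ℕ) (bs : List (ℤ × ℕ)) :
    ofBlocks (b :: bs) = b.1 :: (replicate b.2 1 ++ ofBlocks bs) := rfl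

@[simp]
lemma ofBlocks_append (bs bs' : List (ℤ × ℕ)) :
    ofBlocks (bs ++ bs') = ofBlocks bs ++ ofBlocks bs' :=
  flatMap_append

lemma exists_ofBlocks_cons (x : ℤ) {l : List ℤ} (hl : ∀ z ∈ l, 0 < z) :
    ∃ r bs, x :: l = ofBlocks ((x, r) :: bs) ∧ ∀ b ∈ bs, 2 ≤ b.1 := by
  induction l generalizing x with
  | nil => exact ⟨0, [], by simp, by simp⟩
  | cons z l ih =>
    have hl' : ∀ y ∈ l, 0 < y := fun y hy => hl y (mem_cons_of_mem z hy)
    rcases eq_or_ne z 1 with rfl | hz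
    · obtain ⟨r, bs, hbs, hheads⟩ := ih x hl'
      refine ⟨r + 1, bs, ?_, hheads⟩
      simp_all [replicate_succ]
    · obtain ⟨r, bs, hbs, hheads⟩ := ih z hl'
      refine ⟨0, (z, r) :: bs, by simp_all, ?_⟩
      have := hl z mem_cons_self
      rintro b (_ | ⟨_, hb⟩)
      · simp; omega
      · exact hheads b hb

section Cone

variable {bs : List (ℤ × ℕ)} (hx : ∀ b ∈ bs, 2 ≤ b.1) (hr : ∀ b ∈ bs, b.2 % 3 ≠ 1)
include hx hr

lemma inCone_mProd_ofBlocks : InCone (mProd (ofBlocks bs)) := by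
  induction bs using List.reverseRecOn with
  | nil => exact inCone_one
  | append_singleton bs b ih =>
    simp only [ofBlocks_append, ofBlocks_cons, ofBlocks_nil, append_nil, mProd_append]
    exact (inCone_mProd_cons_replicate_one_mul (hx b (by simp)) (hr b (by simp))
      (ih (fun b hb => hx b (by simp [hb])) (fun b hb => hr b (by simp [hb])))).1

lemma mProd_ofBlocks_apply_ne_zero (hne : bs ≠ []) : mProd (ofBlocks bs) 1 0 ≠ 0 := by
  obtain ⟨bs, b, rfl⟩ := (eq_nil_or_concat bs).resolve_left hne
  rw [concat_eq_append] at hx hr ⊢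
  simp only [ofBlocks_append, ofBlocks_cons, ofBlocks_nil, append_nil, mProd_append]
  exact (inCone_mProd_cons_replicate_one_mul (hx b (by simp)) (hr b (by simp))
    (inCone_mProd_ofBlocks (bs := bs) (fun b hb => hx b (by simp [hb])) (fun b hb => hr b (by simp [hb])))).2

end Cone

lemma mProd_cons_replicate_one_apply_ne_zero {x : ℤ} (hx : x ≠ 0) {r : ℕ} (hr : r % 3 = 1) :
    mProd (x :: replicate r 1) 1 0 ≠ 0 := by
  rw [mProd_cons_replicate_one, hr]
  simpa [mMat, mul_apply, Fin.sum_univ_two] using hx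

lemma mProd_cons_cons_replicate_one_apply_ne_zero {w x : ℤ} (hw : 2 ≤ w) (hx : 2 ≤ x) {r : ℕ}
    (hr : r % 3 = 1) : mProd (w :: x :: replicate r 1) 1 0 ≠ 0 := by
  rw [mProd_cons, mProd_cons_replicate_one, hr]
  rcases neg_one_pow_eq_or ℤ (r / 3) with h | h <;>
    simp [h, mMat, mul_apply, Fin.sum_univ_two] <;> nlinarith

lemma isReducible_of_rotate_eq {c e : List ℤ} {k r : ℕ} {w x : ℤ} (hc : ∀ y ∈ c, 0 < y)
    (hw : 2 ≤ w) (hx : 2 ≤ x) (he : e ≠ []) (hr : r % 3 = 1)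
    (hk : c.rotate k = w :: (e ++ x :: replicate r 1)) : IsReducible {y : ℤ | 0 < y} c := by
  have he_pos : ∀ y ∈ e, 0 < y := fun y hy =>
    hc y (mem_rotate.1 (hk ▸ mem_cons_of_mem _ (mem_append_left _ hy)))
  refine ⟨(w - 1) :: (e ++ [x - 1]), replicate (r + 2) 1, ?_, ?_, ?_, ⟨?_, ?_⟩, Or.inl ⟨k, ?_⟩⟩
  · have := length_pos_iff.2 he
    simp
    omega
  · simp
    omega
  · simp only [mem_cons, mem_append, mem_nil_iff, or_false]
    rintro y (rfl | hy | rfl)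
    · show 0 < w - 1; omega
    · exact he_pos y hy
    · show 0 < x - 1; omega
  · simp
  · exact (mProd_replicate_one_eq_one_or_neg_one_iff _).2 (by omega)
  · rw [hk, replicate_succ, replicate_succ', oplus_cons_append_singleton]
    simp

lemma isReducible_of_rotate_eq_ofBlocks {c : List ℤ} (hc : IsQuiddity {y : ℤ | 0 < y} c)
    {ds : List (ℤ × ℕ)} {x : ℤ} {k r : ℕ} (hds : ∀ b ∈ ds, 2 ≤ b.1) (hx : 2 ≤ x) (hr : r % 3 = 1)
    (hk : c.rotate k = ofBlocks ds ++ x :: replicate r 1) : IsReducible {y : ℤ | 0 < y} c := by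
  have h10 := apply_one_zero_eq_zero_of_eq_one_or_neg_one (mProd_rotate_eq_one_or_neg_one hc.2 k)
  rw [hk] at h10
  rcases ds with _ | ⟨⟨w, r₂⟩, ds⟩
  · exact absurd h10 (mProd_cons_replicate_one_apply_ne_zero (by omega) hr)
  have hw : 2 ≤ w := hds _ mem_cons_self
  by_cases he : replicate r₂ 1 ++ ofBlocks ds = []
  · simp only [ofBlocks_cons, cons_append, he, nil_append] at h10
    exact absurd h10 (mProd_cons_cons_replicate_one_apply_ne_zero hw hx hr)
  · exact isReducible_of_rotate_eq hc.1 hw hx he hr (k := k) (by simp [hk])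

theorem isReducible_of_two_le_mem {c : List ℤ} (hc : IsQuiddity {y : ℤ | 0 < y} c) {z : ℤ}
    (hz : z ∈ c) (hz2 : 2 ≤ z) : IsReducible {y : ℤ | 0 < y} c := by
  obtain ⟨u, s, rfl⟩ := append_of_mem hz
  have hrot : (u ++ z :: s).rotate u.length = z :: (s ++ u) := rotate_append_length_eq _ _
  obtain ⟨r₀, bs, hbs, hheads⟩ := exists_ofBlocks_cons z (l := s ++ u)
    (fun y hy => hc.1 y (by simp at hy ⊢; tauto))
  have hheads' : ∀ b ∈ (z, r₀) :: bs, 2 ≤ b.1 := by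
    rintro b (_ | ⟨_, hb⟩)
    · exact hz2
    · exact hheads b hb
  obtain ⟨⟨x, r⟩, hmem, hr⟩ : ∃ b ∈ (z, r₀) :: bs, b.2 % 3 = 1 := by
    by_contra! hno
    have h := mProd_rotate_eq_one_or_neg_one hc.2 u.length
    rw [hrot, hbs] at h
    exact mProd_ofBlocks_apply_ne_zero hheads' hno (cons_ne_nil _ _)
      (apply_one_zero_eq_zero_of_eq_one_or_neg_one h)
  obtain ⟨bs₁, bs₂, hsplit⟩ := append_of_mem hmem
  refine isReducible_of_rotate_eq_ofBlocks hc (ds := bs₂ ++ bs₁)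
    (k := u.length + (ofBlocks (bs₁ ++ [(x, r)])).length) ?_ (hheads' _ hmem) hr ?_
  · intro b hb
    apply hheads'
    rw [hsplit]
    simp only [mem_append, mem_cons] at hb ⊢
    tauto
  · rw [← rotate_rotate, hrot, hbs, hsplit, ← singleton_append, ← append_assoc, ofBlocks_append,
      rotate_append_length_eq]
    simp

lemma irreducibleQuiddity_replicate_one {n : ℕ} (hn : 0 < n) :
    IrreducibleQuiddity {x : ℤ | 0 < x} (replicate (3 * n) 1) := by
  refine ⟨⟨by simp, (mProd_replicate_one_eq_one_or_neg_one_iff _).2 (by omega)⟩, by simp; omega, ?_⟩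
  rintro ⟨_ | ⟨a₁, a⟩, b, ha, hb, ha_pos, ⟨hb_pos, -⟩, hequiv⟩
  · simp at ha
  obtain ⟨b, bₗ, rfl⟩ := (eq_nil_or_concat b).resolve_left (by rintro rfl; simp at hb)
  have h1 : a₁ + bₗ = 1 := by
    obtain ⟨m, hm⟩ : ∃ m, 3 * n = m + 1 := ⟨3 * n - 1, by omega⟩
    simpa [oplus, hm, replicate_succ] using congrArg head? hequiv.eq_replicate
  have ha₁ : 0 < a₁ := ha_pos a₁ mem_cons_self
  have hbₗ : 0 < bₗ := hb_pos bₗ (by simp)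
  omega

/-- The irreducible λ-quiddities over `ℕ* = {1,2,3,…} ⊆ ℤ` are exactly the constant tuples
`(1,…,1)` of size `3n`, `n ≥ 1`. -/
theorem stmt8 (c : List ℤ) :
    IrreducibleQuiddity {x : ℤ | 0 < x} c ↔
      ∃ n : ℕ, 0 < n ∧ c = List.replicate (3 * n) (1 : ℤ) := by
  constructor
  · rintro ⟨hc, hlen, hirr⟩
    have hone : ∀ z ∈ c, z = 1 := fun z hz => by
      by_contra h
      have := hc.1 z hz
      exact hirr (isReducible_of_two_le_mem hc hz (by simp at this; omega))
    have hrep : c = replicate c.length 1 := eq_replicate_iff.2 ⟨rfl, hone⟩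
    have h3 := (mProd_replicate_one_eq_one_or_neg_one_iff c.length).1 (by rw [← hrep]; exact hc.2)
    exact ⟨c.length / 3, by omega, hrep.trans (by congr 1; omega)⟩
  · rintro ⟨n, hn, rfl⟩
    exact irreducibleQuiddity_replicate_one hn
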